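/- arXiv:2212.09021 — 3 statements merged into one kernel-verified Lean document; each statement's English description precedes it below -/
import Mathlib

section
/- Let K ≥ 1, K' ≥ 0 and λ > 0. Let f = h + conj(g) be a sense-preserving (K,K')-elliptic harmonic mapping on the unit disc 𝔻, where h(z) = Σ_{n≥1} a_n z^n and g(z) = Σ_{n≥1} b_n z^n are analytic on 𝔻. If λ_f(z) ≤ λ for all z ∈ 𝔻, then for every n ≥ 1, |a_n| + |b_n| ≤ (Kλ + √K')/n. -/
/-!
Ellipticity says `(K + 1)|g'| ≤ (K - 1)|h'| + √K'`; adding `K(|h'| - |g'|) ≤ Kλ` gives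
`|h'| + |g'| ≤ Kλ + √K'` on the disc. Choose unimodular `u, v` with `u aₙ = |aₙ|` and
`v bₙ = |bₙ|`: the holomorphic function `φ = u h + v g` has `n`-th coefficient `|aₙ| + |bₙ|` and
`|φ'| ≤ |h'| + |g'|`, so Cauchy's estimate for the `(n-1)`-st coefficient of `φ'` on circles of
radius `r → 1` gives `n (|aₙ| + |bₙ|) ≤ Kλ + √K'`.
-/

open Metric Topology
open scoped Nat NNReal ENNReal

theorem norm_add_norm_le_of_elliptic {K lam s A B : ℝ} (hK : 0 ≤ K)
    (hAB : A - B ≤ lam) (hB : B ≤ (K - 1) / (K + 1) * A + s / (K + 1)) :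
    A + B ≤ K * lam + s := by
  have hK1 : 0 < K + 1 := by linarith
  rw [div_mul_eq_mul_div, ← add_div, le_div_iff₀ hK1] at hB
  linarith [mul_le_mul_of_nonneg_left hAB hK]

theorem iteratedDeriv_eq_factorial_mul_of_hasSum {f : ℂ → ℂ} {c : ℕ → ℂ} {R : ℝ} (hR : 0 < R)
    (hf : ∀ z ∈ ball (0 : ℂ) R, HasSum (fun n ↦ c n * z ^ n) (f z)) (n : ℕ) :
    iteratedDeriv n f 0 = n ! * c n := by
  set p := FormalMultilinearSeries.ofScalars ℂ c
  let r : ℝ≥0 := ⟨R / 2, by positivity⟩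
  have hrR : (r : ℝ) < R := show R / 2 < R by linarith
  have hr_mem : ((r : ℝ) : ℂ) ∈ ball (0 : ℂ) R := by
    simpa [abs_of_nonneg r.2] using hrR
  have hradius : (r : ℝ≥0∞) ≤ p.radius := by
    refine p.le_radius_of_tendsto (l := 0) ?_
    simpa [p, FormalMultilinearSeries.ofScalars_norm, abs_of_nonneg r.2]
      using (hf _ hr_mem).summable.tendsto_atTop_zero.norm
  have hp : HasFPowerSeriesOnBall f p 0 r := by
    refine ⟨hradius, ENNReal.coe_pos.mpr (NNReal.coe_pos.mp (half_pos hR)), fun {y} hy ↦ ?_⟩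
    have hy' : y ∈ ball (0 : ℂ) R := by
      rw [Metric.mem_eball, edist_zero_right, enorm_eq_nnnorm, ENNReal.coe_lt_coe] at hy
      exact mem_ball_zero_iff.mpr (lt_trans (by exact_mod_cast hy) hrR)
    simpa [p, FormalMultilinearSeries.ofScalars_apply_eq, mul_comm] using hf y hy'
  rw [iteratedDeriv_eq_iteratedFDeriv, ← hp.factorial_smul 1 n]
  simp [p, nsmul_eq_mul]

theorem norm_iteratedDeriv_le_of_forall_mem_ball_norm_le {E : Type*} [NormedAddCommGroup E]
    [NormedSpace ℂ E] [CompleteSpace E] {f : ℂ → E} {c : ℂ} {R M : ℝ} (hR : 0 < R)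
    (hf : DifferentiableOn ℂ f (ball c R)) (hM : ∀ z ∈ ball c R, ‖f z‖ ≤ M) (n : ℕ) :
    ‖iteratedDeriv n f c‖ ≤ n ! * M / R ^ n := by
  have hcont : ContinuousAt (fun r : ℝ ↦ n ! * M / r ^ n) R :=
    continuousAt_const.div (continuousAt_id.pow n) (pow_ne_zero n hR.ne')
  refine ge_of_tendsto (x := 𝓝[<] R) (hcont.tendsto.mono_left nhdsWithin_le_nhds) ?_
  filter_upwards [Ioo_mem_nhdsLT hR] with r ⟨hr0, hrR⟩
  exact Complex.norm_iteratedDeriv_le_of_forall_mem_sphere_norm_le n hr0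
    (hf.diffContOnCl_ball (closedBall_subset_ball hrR))
    fun z hz ↦ hM z (sphere_subset_closedBall.trans (closedBall_subset_ball hrR) hz)

theorem norm_deriv_const_mul_add_const_mul_le {f g : ℂ → ℂ} {z u v : ℂ} (hu : ‖u‖ = 1)
    (hv : ‖v‖ = 1) (hf : DifferentiableAt ℂ f z) (hg : DifferentiableAt ℂ g z) :
    ‖deriv (fun w ↦ u * f w + v * g w) z‖ ≤ ‖deriv f z‖ + ‖deriv g z‖ := by
  rw [deriv_fun_add (hf.const_mul u) (hg.const_mul v), deriv_const_mul u hf,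
    deriv_const_mul v hg]
  calc ‖u * deriv f z + v * deriv g z‖ ≤ ‖u * deriv f z‖ + ‖v * deriv g z‖ := norm_add_le _ _
    _ = ‖deriv f z‖ + ‖deriv g z‖ := by rw [norm_mul, norm_mul, hu, hv, one_mul, one_mul]

theorem succ_mul_norm_coeff_le_of_norm_deriv_le {f : ℂ → ℂ} {c : ℕ → ℂ} {R M : ℝ} (hR : 0 < R)
    (hf : DifferentiableOn ℂ f (ball 0 R))
    (hc : ∀ z ∈ ball (0 : ℂ) R, HasSum (fun n ↦ c (n + 1) * z ^ (n + 1)) (f z))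
    (hM : ∀ z ∈ ball (0 : ℂ) R, ‖deriv f z‖ ≤ M) (n : ℕ) :
    (n + 1) * ‖c (n + 1)‖ ≤ M / R ^ n := by
  have hc₀ : ∀ z ∈ ball (0 : ℂ) R, HasSum (fun n ↦ Function.update c 0 0 n * z ^ n) (f z) :=
    fun z hz ↦ by
      simpa using (hasSum_nat_add_iff (f := fun n ↦ Function.update c 0 0 n * z ^ n) 1).mp
        (by simpa using hc z hz)
  have hcauchy := norm_iteratedDeriv_le_of_forall_mem_ball_norm_le hR (hf.deriv isOpen_ball) hM n
  rw [← iteratedDeriv_succ', iteratedDeriv_eq_factorial_mul_of_hasSum hR hc₀,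
    Function.update_of_ne n.succ_ne_zero, norm_mul, Complex.norm_natCast, Nat.factorial_succ,
    mul_div_assoc] at hcauchy
  push_cast at hcauchy
  exact le_of_mul_le_mul_left (by linarith) (Nat.cast_pos.mpr n.factorial_pos)

theorem coeff_bound_elliptic_general
    (K K' lam : ℝ) (hK : 1 ≤ K)
    (h g : ℂ → ℂ) (a b : ℕ → ℂ)
    (hh : DifferentiableOn ℂ h (ball (0:ℂ) 1))
    (hg : DifferentiableOn ℂ g (ball (0:ℂ) 1))
    (hha : ∀ z ∈ ball (0:ℂ) 1, HasSum (fun n : ℕ => a (n + 1) * z ^ (n + 1)) (h z))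
    (hgb : ∀ z ∈ ball (0:ℂ) 1, HasSum (fun n : ℕ => b (n + 1) * z ^ (n + 1)) (g z))
    (hell : ∀ z ∈ ball (0:ℂ) 1,
      ‖deriv g z‖ ≤ ((K - 1) / (K + 1)) * ‖deriv h z‖
        + Real.sqrt K' / (K + 1))
    (hlamf : ∀ z ∈ ball (0:ℂ) 1,
      |‖deriv h z‖ - ‖deriv g z‖| ≤ lam) :
    ∀ n : ℕ, 1 ≤ n →
      ‖a n‖ + ‖b n‖ ≤ (K * lam + Real.sqrt K') / n := by
  intro n hn
  obtain ⟨m, rfl⟩ := Nat.exists_eq_add_of_le' hn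
  obtain ⟨u, hu, hua⟩ := Complex.exists_norm_eq_mul_self (a (m + 1))
  obtain ⟨v, hv, hvb⟩ := Complex.exists_norm_eq_mul_self (b (m + 1))
  have hdiff : DifferentiableOn ℂ (fun z ↦ u * h z + v * g z) (ball 0 1) :=
    (hh.const_mul u).add (hg.const_mul v)
  have hsum : ∀ z ∈ ball (0 : ℂ) 1,
      HasSum (fun n ↦ (u * a (n + 1) + v * b (n + 1)) * z ^ (n + 1)) (u * h z + v * g z) :=
    fun z hz ↦ by
    simpa only [add_mul, mul_assoc] using ((hha z hz).mul_left u).add ((hgb z hz).mul_left v)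
  have hderiv : ∀ z ∈ ball (0 : ℂ) 1,
      ‖deriv (fun z ↦ u * h z + v * g z) z‖ ≤ K * lam + Real.sqrt K' := fun z hz ↦
    have hz' := isOpen_ball.mem_nhds hz
    (norm_deriv_const_mul_add_const_mul_le hu hv (hh.differentiableAt hz')
      (hg.differentiableAt hz')).trans <| norm_add_norm_le_of_elliptic (by linarith)
        (abs_le.mp (hlamf z hz)).2 (hell z hz)
  have hcoeff := succ_mul_norm_coeff_le_of_norm_deriv_le (c := fun n ↦ u * a n + v * b n)
    one_pos hdiff hsum hderiv m
  rw [← hua, ← hvb, ← Complex.ofReal_add, Complex.norm_real, Real.norm_of_nonneg (by positivity),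
    one_pow, div_one] at hcoeff
  rw [Nat.cast_add_one, le_div_iff₀' (by positivity)]
  exact hcoeff

/-- Coefficient bound for (K,K')-elliptic harmonic mappings:
if λ_f ≤ λ on 𝔻 then |a_n| + |b_n| ≤ (Kλ + √K')/n. -/
theorem coeff_bound_elliptic
    (K K' lam : ℝ) (hK : 1 ≤ K) (hK' : 0 ≤ K') (hlam : 0 < lam)
    (h g : ℂ → ℂ) (a b : ℕ → ℂ)
    (hh : DifferentiableOn ℂ h (ball (0:ℂ) 1))
    (hg : DifferentiableOn ℂ g (ball (0:ℂ) 1))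
    (hha : ∀ z ∈ ball (0:ℂ) 1, HasSum (fun n : ℕ => a (n + 1) * z ^ (n + 1)) (h z))
    (hgb : ∀ z ∈ ball (0:ℂ) 1, HasSum (fun n : ℕ => b (n + 1) * z ^ (n + 1)) (g z))
    (hsp : ∀ z ∈ ball (0:ℂ) 1,
      0 < ‖deriv h z‖ ^ 2 - ‖deriv g z‖ ^ 2)
    (hell : ∀ z ∈ ball (0:ℂ) 1,
      ‖deriv g z‖ ≤ ((K - 1) / (K + 1)) * ‖deriv h z‖
        + Real.sqrt K' / (K + 1))
    (hlamf : ∀ z ∈ ball (0:ℂ) 1,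
      |‖deriv h z‖ - ‖deriv g z‖| ≤ lam) :
    ∀ n : ℕ, 1 ≤ n →
      ‖a n‖ + ‖b n‖ ≤ (K * lam + Real.sqrt K') / n :=
  coeff_bound_elliptic_general K K' lam hK h g a b hh hg hha hgb hell hlamf
end

section
/- Let K ≥ 1, K' ≥ 0 and λ > 0. Let f = h + conj(g) be a sense-preserving (K,K')-elliptic harmonic mapping on the unit disc 𝔻 with f(0) = 0, λ_f(0) = 1, and λ_f(z) ≤ λ for all z ∈ 𝔻. Then f is injective on the disc 𝔻_{ρ₁} = {z : |z| < ρ₁}, where ρ₁ = 1/(1 + Kλ + √K'). -/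
/-!
Put `a = h'(0)`, `b = g'(0)` and `M = Kλ + √K'`; ellipticity together with `λ_f ≤ λ` gives
`|h'| + |g'| ≤ M` on the disc. If `f z₁ = f z₂` with `u = z₂ - z₁ ≠ 0` and `|z₁|, |z₂| ≤ r`,
the linear part `a u + conj (b u)` of the increment, of modulus at least `(|a| - |b|) |u| = |u|`,
is cancelled by the remainders `A`, `B` of `h` and `g`. Choosing `|μ| = 1` with
`|A + μ B| = |A| + |B|`, the function `φ = h' + μ g'` is analytic and bounded by `M`, so the
Schwarz–Pick lemma gives `|φ w - φ 0| ≤ M r / (1 - r)` for `|w| ≤ r`, and the mean value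
inequality for `h + μ g` yields `|u| ≤ |A| + |B| ≤ M r / (1 - r) |u| < |u|` once `r < 1 / (1 + M)`.
-/

open Complex Metric ComplexConjugate Set

namespace Complex

theorem normSq_one_sub_conj_mul_sub_normSq_sub (c w : ℂ) :
    normSq (1 - conj c * w) - normSq (w - c) = (1 - normSq c) * (1 - normSq w) := by
  simp only [normSq_apply, sub_re, sub_im, mul_re, mul_im, conj_re, conj_im, one_re, one_im]
  ring

theorem norm_sub_lt_norm_one_sub_conj_mul {c w : ℂ} (hc : ‖c‖ < 1) (hw : ‖w‖ < 1) :
    ‖w - c‖ < ‖1 - conj c * w‖ := by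
  have key := normSq_one_sub_conj_mul_sub_normSq_sub c w
  simp only [normSq_eq_norm_sq] at key
  have hpos : 0 < (1 - ‖c‖ ^ 2) * (1 - ‖w‖ ^ 2) := by
    apply mul_pos <;> nlinarith [norm_nonneg c, norm_nonneg w]
  exact lt_of_pow_lt_pow_left₀ 2 (norm_nonneg _) (by linarith)

/-- Schwarz–Pick at the origin, via the disc automorphism sending `F 0` to `0`. -/
theorem norm_sub_apply_zero_le_mul_norm_one_sub {F : ℂ → ℂ}
    (hd : DifferentiableOn ℂ F (ball 0 1)) (hF : MapsTo F (ball 0 1) (ball 0 1))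
    {z : ℂ} (hz : z ∈ ball (0 : ℂ) 1) :
    ‖F z - F 0‖ ≤ ‖z‖ * ‖1 - conj (F 0) * F z‖ := by
  have hc : ‖F 0‖ < 1 := mem_ball_zero_iff.1 (hF (mem_ball_self one_pos))
  have hlt : ∀ w ∈ ball (0 : ℂ) 1, ‖F w - F 0‖ < ‖1 - conj (F 0) * F w‖ := fun w hw =>
    norm_sub_lt_norm_one_sub_conj_mul hc (mem_ball_zero_iff.1 (hF hw))
  have hden : ∀ w ∈ ball (0 : ℂ) 1, 1 - conj (F 0) * F w ≠ 0 := fun w hw =>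
    norm_pos_iff.1 ((norm_nonneg _).trans_lt (hlt w hw))
  set ψ : ℂ → ℂ := fun w => (F w - F 0) / (1 - conj (F 0) * F w)
  have hψd : DifferentiableOn ℂ ψ (ball 0 1) :=
    (hd.sub_const _).div ((differentiableOn_const _).sub (hd.const_mul _)) hden
  have hψ : MapsTo ψ (ball 0 1) (closedBall 0 1) := fun w hw => by
    rw [mem_closedBall_zero_iff, norm_div, div_le_one (norm_pos_iff.2 (hden w hw))]
    exact (hlt w hw).le
  have := norm_le_norm_of_mapsTo_ball hψd hψ (by simp [ψ]) (mem_ball_zero_iff.1 hz)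
  rwa [norm_div, div_le_iff₀ (norm_pos_iff.2 (hden z hz))] at this

theorem norm_sub_apply_zero_mul_one_sub_norm_le {F : ℂ → ℂ}
    (hd : DifferentiableOn ℂ F (ball 0 1)) (hF : MapsTo F (ball 0 1) (ball 0 1))
    {z : ℂ} (hz : z ∈ ball (0 : ℂ) 1) :
    ‖F z - F 0‖ * (1 - ‖z‖) ≤ ‖z‖ := by
  have hpick := norm_sub_apply_zero_le_mul_norm_one_sub hd hF hz
  have hc : ‖F 0‖ < 1 := mem_ball_zero_iff.1 (hF (mem_ball_self one_pos))
  have hz1 : ‖z‖ < 1 := mem_ball_zero_iff.1 hz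
  have hdenom : ‖1 - conj (F 0) * F z‖ ≤ 1 - ‖F 0‖ ^ 2 + ‖F 0‖ * ‖F z - F 0‖ := by
    have : 1 - conj (F 0) * F z = ((1 - ‖F 0‖ ^ 2 : ℝ) : ℂ) - conj (F 0) * (F z - F 0) := by
      push_cast
      rw [← mul_conj', mul_comm]
      ring
    rw [this]
    refine (norm_sub_le _ _).trans_eq ?_
    rw [norm_mul, norm_conj, norm_real, Real.norm_of_nonneg (by nlinarith [norm_nonneg (F 0)])]
  nlinarith [mul_le_mul_of_nonneg_left hdenom (norm_nonneg z), norm_nonneg z, norm_nonneg (F 0),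
    norm_nonneg (F z - F 0), mul_nonneg (norm_nonneg z) (norm_nonneg (F z - F 0))]

theorem norm_sub_apply_zero_le_of_norm_le {φ : ℂ → ℂ} {M r : ℝ}
    (hd : DifferentiableOn ℂ φ (ball 0 1)) (hb : ∀ w ∈ ball (0 : ℂ) 1, ‖φ w‖ ≤ M)
    (hr : r < 1) {z : ℂ} (hz : ‖z‖ ≤ r) :
    ‖φ z - φ 0‖ ≤ M * r / (1 - r) := by
  have hz1 : z ∈ ball (0 : ℂ) 1 := mem_ball_zero_iff.2 (hz.trans_lt hr)
  have hM : 0 ≤ M := (norm_nonneg _).trans (hb 0 (mem_ball_self one_pos))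
  have hN : ∀ N ∈ Ioi M, ‖φ z - φ 0‖ ≤ N * r / (1 - r) := fun N (hMN : M < N) => by
    have hN : 0 < N := hM.trans_lt hMN
    have hF : MapsTo (fun w => φ w / N) (ball 0 1) (ball 0 1) := fun w hw => by
      rw [mem_ball_zero_iff, norm_div, norm_real, Real.norm_of_nonneg hN.le, div_lt_one hN]
      exact (hb w hw).trans_lt hMN
    have := norm_sub_apply_zero_mul_one_sub_norm_le (hd.div_const (N : ℂ)) hF hz1
    rw [← sub_div, norm_div, norm_real, Real.norm_of_nonneg hN.le, div_mul_eq_mul_div,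
      div_le_iff₀ hN] at this
    rw [le_div_iff₀ (by linarith)]
    nlinarith [norm_nonneg (φ z - φ 0)]
  exact ge_of_tendsto
    ((Filter.tendsto_id.mul_const r).div_const (1 - r) |>.mono_left nhdsWithin_le_nhds)
    (eventually_nhdsWithin_of_forall hN)

theorem exists_norm_eq_one_norm_add_mul_eq (A B : ℂ) :
    ∃ μ : ℂ, ‖μ‖ = 1 ∧ ‖A + μ * B‖ = ‖A‖ + ‖B‖ := by
  refine ⟨exp (↑(arg A - arg B) * I), norm_exp_ofReal_mul_I _, ?_⟩
  have he : exp (↑(arg A - arg B) * I) * exp (arg B * I) = exp (arg A * I) := by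
    rw [← exp_add]; push_cast; ring_nf
  have : A + exp (↑(arg A - arg B) * I) * B = ((‖A‖ + ‖B‖ : ℝ) : ℂ) * exp (arg A * I) :=
    calc A + exp (↑(arg A - arg B) * I) * B
        = ‖A‖ * exp (arg A * I) + exp (↑(arg A - arg B) * I) * (‖B‖ * exp (arg B * I)) := by
          rw [norm_mul_exp_arg_mul_I, norm_mul_exp_arg_mul_I]
      _ = ((‖A‖ + ‖B‖ : ℝ) : ℂ) * exp (arg A * I) := by
          rw [ofReal_add]
          linear_combination (‖B‖ : ℂ) * he
  rw [this, norm_mul, norm_exp_ofReal_mul_I, mul_one, norm_real,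
    Real.norm_of_nonneg (by positivity)]

theorem sub_norm_mul_norm_le_of_add_conj_eq {h g : ℂ → ℂ} {z₁ z₂ : ℂ} (a b : ℂ)
    (heq : h z₁ + conj (g z₁) = h z₂ + conj (g z₂)) :
    (‖a‖ - ‖b‖) * ‖z₂ - z₁‖ ≤
      ‖h z₂ - h z₁ - a * (z₂ - z₁)‖ + ‖g z₂ - g z₁ - b * (z₂ - z₁)‖ := by
  set u := z₂ - z₁
  set A := h z₂ - h z₁ - a * u
  set B := g z₂ - g z₁ - b * u
  have hlin : a * u + conj (b * u) = -(A + conj B) := by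
    simp only [A, B, map_sub, map_mul]
    linear_combination -heq
  calc (‖a‖ - ‖b‖) * ‖u‖ = ‖a * u‖ - ‖conj (b * u)‖ := by
        rw [norm_conj, norm_mul, norm_mul]; ring
    _ ≤ ‖a * u + conj (b * u)‖ := norm_sub_le_norm_add _ _
    _ = ‖A + conj B‖ := by rw [hlin, norm_neg]
    _ ≤ ‖A‖ + ‖B‖ := (norm_add_le _ _).trans_eq (by rw [norm_conj])

theorem norm_sub_sub_deriv_add_norm_sub_sub_deriv_le {h g : ℂ → ℂ} {M r : ℝ}
    (hh : DifferentiableOn ℂ h (ball 0 1)) (hg : DifferentiableOn ℂ g (ball 0 1))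
    (hM : ∀ z ∈ ball (0 : ℂ) 1, ‖deriv h z‖ + ‖deriv g z‖ ≤ M) (hr : r < 1)
    {z₁ z₂ : ℂ} (hz₁ : ‖z₁‖ ≤ r) (hz₂ : ‖z₂‖ ≤ r) :
    ‖h z₂ - h z₁ - deriv h 0 * (z₂ - z₁)‖ + ‖g z₂ - g z₁ - deriv g 0 * (z₂ - z₁)‖ ≤
      M * r / (1 - r) * ‖z₂ - z₁‖ := by
  obtain ⟨μ, hμ, hμeq⟩ := exists_norm_eq_one_norm_add_mul_eq
    (h z₂ - h z₁ - deriv h 0 * (z₂ - z₁)) (g z₂ - g z₁ - deriv g 0 * (z₂ - z₁))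
  set φ : ℂ → ℂ := fun w => deriv h w + μ * deriv g w
  have hφ : ∀ w ∈ ball (0 : ℂ) 1, ‖φ w‖ ≤ M := fun w hw =>
    (norm_add_le _ _).trans (by rw [norm_mul, hμ, one_mul]; exact hM w hw)
  have hφd : DifferentiableOn ℂ φ (ball 0 1) :=
    (hh.deriv isOpen_ball).add ((hg.deriv isOpen_ball).const_mul μ)
  have hsub : closedBall (0 : ℂ) r ⊆ ball 0 1 := closedBall_subset_ball hr
  have hderiv : ∀ w ∈ closedBall (0 : ℂ) r, HasDerivWithinAt
      (fun x => h x + μ * g x - φ 0 * x) (φ w - φ 0) (closedBall 0 r) w := fun w hw => by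
    have hw := isOpen_ball.mem_nhds (hsub hw)
    exact (((hh.differentiableAt hw).hasDerivAt.add
      ((hg.differentiableAt hw).hasDerivAt.const_mul μ)).sub
      ((hasDerivAt_id w).const_mul (φ 0))).hasDerivWithinAt.congr_deriv (by simp [φ])
  have hmvt := (convex_closedBall (0 : ℂ) r).norm_image_sub_le_of_norm_hasDerivWithin_le hderiv
    (fun w hw => norm_sub_apply_zero_le_of_norm_le hφd hφ hr (mem_closedBall_zero_iff.1 hw))
    (mem_closedBall_zero_iff.2 hz₁) (mem_closedBall_zero_iff.2 hz₂)
  have hincr : h z₂ - h z₁ - deriv h 0 * (z₂ - z₁) + μ * (g z₂ - g z₁ - deriv g 0 * (z₂ - z₁)) =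
      h z₂ + μ * g z₂ - φ 0 * z₂ - (h z₁ + μ * g z₁ - φ 0 * z₁) := by
    simp only [φ]; ring
  rwa [← hμeq, hincr]

end Complex

theorem injOn_ball_of_norm_deriv_add_norm_deriv_le {h g f : ℂ → ℂ} {M : ℝ}
    (hf : ∀ z ∈ ball (0 : ℂ) 1, f z = h z + conj (g z))
    (hh : DifferentiableOn ℂ h (ball 0 1)) (hg : DifferentiableOn ℂ g (ball 0 1))
    (h0 : 1 ≤ ‖deriv h 0‖ - ‖deriv g 0‖)
    (hM : ∀ z ∈ ball (0 : ℂ) 1, ‖deriv h z‖ + ‖deriv g z‖ ≤ M) :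
    InjOn f (ball 0 (1 / (1 + M))) := by
  have hM0 : 0 ≤ M := (by positivity : (0 : ℝ) ≤ _).trans (hM 0 (mem_ball_self one_pos))
  intro z₁ hz₁ z₂ hz₂ heq
  set r := max ‖z₁‖ ‖z₂‖
  have hr : r * (1 + M) < 1 :=
    (lt_div_iff₀ (by linarith)).1 (max_lt (mem_ball_zero_iff.1 hz₁) (mem_ball_zero_iff.1 hz₂))
  have hr1 : r < 1 := by nlinarith [(norm_nonneg z₁).trans (le_max_left _ ‖z₂‖)]
  have hball : ∀ z, ‖z‖ ≤ r → z ∈ ball (0 : ℂ) 1 := fun z hz =>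
    mem_ball_zero_iff.2 (hz.trans_lt hr1)
  rw [hf z₁ (hball z₁ (le_max_left _ _)), hf z₂ (hball z₂ (le_max_right _ _))] at heq
  have hkey := (sub_norm_mul_norm_le_of_add_conj_eq (deriv h 0) (deriv g 0) heq).trans
    (norm_sub_sub_deriv_add_norm_sub_sub_deriv_le hh hg hM hr1 (le_max_left _ _) (le_max_right _ _))
  have hq : M * r / (1 - r) < 1 := by rw [div_lt_one (by linarith)]; linarith
  by_contra hne
  have hu : 0 < ‖z₂ - z₁‖ := norm_pos_iff.2 (sub_ne_zero.2 (Ne.symm hne))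
  nlinarith

theorem add_le_mul_add_of_le_of_sub_le {K lam t x y : ℝ} (hK : 0 ≤ K)
    (hy : y ≤ (K - 1) / (K + 1) * x + t / (K + 1)) (hxy : x - y ≤ lam) :
    x + y ≤ K * lam + t := by
  have hy' : (K + 1) * y ≤ (K - 1) * x + t := by
    have := mul_le_mul_of_nonneg_left hy (by linarith : (0 : ℝ) ≤ K + 1)
    rwa [mul_add, mul_div_cancel₀ _ (by linarith), ← mul_assoc,
      mul_div_cancel₀ _ (by linarith)] at this
  nlinarith [mul_le_mul_of_nonneg_left hxy hK]

theorem landau_univalent_elliptic_general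
    (K K' lam : ℝ) (hK : 1 ≤ K)
    (h g f : ℂ → ℂ)
    (hf : ∀ z ∈ ball (0:ℂ) 1, f z = h z + (starRingEnd ℂ) (g z))
    (hh : DifferentiableOn ℂ h (ball (0:ℂ) 1))
    (hg : DifferentiableOn ℂ g (ball (0:ℂ) 1))
    (hsp : ∀ z ∈ ball (0:ℂ) 1,
      0 < ‖deriv h z‖ ^ 2 - ‖deriv g z‖ ^ 2)
    (hell : ∀ z ∈ ball (0:ℂ) 1,
      ‖deriv g z‖ ≤ ((K - 1) / (K + 1)) * ‖deriv h z‖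
        + Real.sqrt K' / (K + 1))
    (hlam0 : |‖deriv h 0‖ - ‖deriv g 0‖| = 1)
    (hlamf : ∀ z ∈ ball (0:ℂ) 1,
      |‖deriv h z‖ - ‖deriv g z‖| ≤ lam) :
    Set.InjOn f (ball (0:ℂ) (1 / (1 + K * lam + Real.sqrt K'))) := by
  have h0 : ‖deriv h 0‖ - ‖deriv g 0‖ = 1 := by
    have hlt := sub_pos.1 (hsp 0 (mem_ball_self one_pos))
    rwa [abs_of_pos (sub_pos.2 (lt_of_pow_lt_pow_left₀ 2 (norm_nonneg _) hlt))] at hlam0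
  have hM : ∀ z ∈ ball (0 : ℂ) 1, ‖deriv h z‖ + ‖deriv g z‖ ≤ K * lam + Real.sqrt K' :=
    fun z hz => add_le_mul_add_of_le_of_sub_le (by linarith) (hell z hz)
      ((le_abs_self _).trans (hlamf z hz))
  rw [add_assoc]
  exact injOn_ball_of_norm_deriv_add_norm_deriv_le hf hh hg h0.ge hM

/-- Landau-type theorem (univalence part) for (K,K')-elliptic harmonic mappings:
f is injective on the disc of radius ρ₁ = 1/(1 + Kλ + √K'). -/
theorem landau_univalent_elliptic
    (K K' lam : ℝ) (hK : 1 ≤ K) (hK' : 0 ≤ K') (hlam : 0 < lam)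
    (h g f : ℂ → ℂ)
    (hf : ∀ z ∈ ball (0:ℂ) 1, f z = h z + (starRingEnd ℂ) (g z))
    (hh : DifferentiableOn ℂ h (ball (0:ℂ) 1))
    (hg : DifferentiableOn ℂ g (ball (0:ℂ) 1))
    (hsp : ∀ z ∈ ball (0:ℂ) 1,
      0 < ‖deriv h z‖ ^ 2 - ‖deriv g z‖ ^ 2)
    (hell : ∀ z ∈ ball (0:ℂ) 1,
      ‖deriv g z‖ ≤ ((K - 1) / (K + 1)) * ‖deriv h z‖
        + Real.sqrt K' / (K + 1))
    (hf0 : f 0 = 0)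
    (hlam0 : |‖deriv h 0‖ - ‖deriv g 0‖| = 1)
    (hlamf : ∀ z ∈ ball (0:ℂ) 1,
      |‖deriv h z‖ - ‖deriv g z‖| ≤ lam) :
    Set.InjOn f (ball (0:ℂ) (1 / (1 + K * lam + Real.sqrt K'))) :=
  landau_univalent_elliptic_general K K' lam hK h g f hf hh hg hsp hell hlam0 hlamf
end

section
/- Let K ≥ 1 and λ > 0. Let f = h + conj(g) be a sense-preserving K-quasiregular harmonic mapping on the unit disc 𝔻 with f(0) = 0, J_f(0) = 1, and λ_f(z) ≤ λ for all z ∈ 𝔻. Set ρ = 1/(1 + λK^{3/2}). Then for every z with |z| = ρ, |f(z)| ≥ ρ/√K + Kλ(ρ + ln(1 − ρ)). -/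
/-!
Since `Λ_f ≤ K λ_f ≤ K λ`, the derivatives `h'` and `g'` are holomorphic with `|h'| + |g'| ≤ K λ`,
and Cauchy's estimate gives `|h'(ζ) - h'(0)| + |g'(ζ) - g'(0)| ≤ K λ |ζ| / (1 - |ζ|)`.
Integrating along the radius `[0, z]`, `f` differs from its linear part
`h'(0) z + conj (g'(0) z)` by at most `K λ (-ρ - log (1 - ρ))` on `|z| = ρ`, while the linear
part has modulus at least `ρ (|h'(0)| - |g'(0)|) ≥ ρ / √K` because `J_f(0) = 1` and `f` is
`K`-quasiregular at `0`.
-/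

open Complex Metric Filter Set Topology ComplexConjugate

theorem norm_deriv_le_div_one_sub_norm {F : ℂ → ℂ} {M : ℝ}
    (hF : DifferentiableOn ℂ F (ball 0 1)) (hM : ∀ z ∈ ball (0 : ℂ) 1, ‖F z‖ ≤ M)
    {ζ : ℂ} (hζ : ‖ζ‖ < 1) :
    ‖deriv F ζ‖ ≤ M / (1 - ‖ζ‖) := by
  have hd : 0 < 1 - ‖ζ‖ := sub_pos.2 hζ
  -- Cauchy's estimate on circles about `ζ` inside the disc, then let the radius tend to `1 - ‖ζ‖`.
  have cauchy : ∀ r ∈ Ioo 0 (1 - ‖ζ‖), ‖deriv F ζ‖ ≤ M / r := by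
    rintro r ⟨hr0, hr⟩
    have hsub : closedBall ζ r ⊆ ball 0 1 := fun w hw => by
      rw [mem_closedBall, dist_eq_norm] at hw
      rw [mem_ball_zero_iff]
      calc ‖w‖ ≤ ‖w - ζ‖ + ‖ζ‖ := norm_le_norm_sub_add w ζ
        _ < 1 := by linarith
    exact Complex.norm_deriv_le_of_forall_mem_sphere_norm_le hr0 (hF.diffContOnCl_ball hsub)
      fun w hw => hM w (hsub (sphere_subset_closedBall hw))
  have hlim : Tendsto (fun r => M / r) (𝓝[<] (1 - ‖ζ‖)) (𝓝 (M / (1 - ‖ζ‖))) :=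
    (tendsto_const_nhds.div tendsto_id hd.ne').mono_left nhdsWithin_le_nhds
  exact ge_of_tendsto hlim (eventually_of_mem (Ioo_mem_nhdsLT hd) cauchy)

theorem norm_sub_le_mul_div_one_sub_norm {F : ℂ → ℂ} {M : ℝ}
    (hF : DifferentiableOn ℂ F (ball 0 1)) (hM : ∀ z ∈ ball (0 : ℂ) 1, ‖F z‖ ≤ M)
    {w : ℂ} (hw : ‖w‖ < 1) :
    ‖F w - F 0‖ ≤ M * ‖w‖ / (1 - ‖w‖) := by
  have hM0 : 0 ≤ M := (norm_nonneg _).trans (hM 0 (mem_ball_self one_pos))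
  have bound : ∀ ζ ∈ closedBall (0 : ℂ) ‖w‖, ‖deriv F ζ‖ ≤ M / (1 - ‖w‖) := fun ζ hζ => by
    rw [mem_closedBall_zero_iff] at hζ
    calc ‖deriv F ζ‖ ≤ M / (1 - ‖ζ‖) := norm_deriv_le_div_one_sub_norm hF hM (hζ.trans_lt hw)
      _ ≤ M / (1 - ‖w‖) := by gcongr
  have hdiff : ∀ ζ ∈ closedBall (0 : ℂ) ‖w‖, DifferentiableAt ℂ F ζ := fun ζ hζ =>
    hF.differentiableAt (isOpen_ball.mem_nhds (closedBall_subset_ball hw hζ))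
  simpa [mul_div_right_comm] using (convex_closedBall (0 : ℂ) ‖w‖).norm_image_sub_le_of_norm_deriv_le
    hdiff bound (mem_closedBall_self (norm_nonneg w)) (by simp)

theorem exists_norm_eq_one_mul_eq_norm (a : ℂ) : ∃ α : ℂ, ‖α‖ = 1 ∧ α * a = ‖a‖ :=
  ⟨exp (-arg a * I), by simpa using norm_exp_ofReal_mul_I (-arg a), by
    conv_lhs => rw [← norm_mul_exp_arg_mul_I a]
    rw [mul_left_comm, ← exp_add]
    simp⟩

theorem norm_sub_add_norm_sub_le_mul_div_one_sub_norm {φ ψ : ℂ → ℂ} {M : ℝ}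
    (hφ : DifferentiableOn ℂ φ (ball 0 1)) (hψ : DifferentiableOn ℂ ψ (ball 0 1))
    (hM : ∀ z ∈ ball (0 : ℂ) 1, ‖φ z‖ + ‖ψ z‖ ≤ M) {w : ℂ} (hw : ‖w‖ < 1) :
    ‖φ w - φ 0‖ + ‖ψ w - ψ 0‖ ≤ M * ‖w‖ / (1 - ‖w‖) := by
  -- Rotating `φ` and `ψ` so that both increments become nonnegative reals reduces the claim to
  -- the bound for the single function `α φ + β ψ`, which is still bounded by `M`.
  obtain ⟨α, hα, hαφ⟩ := exists_norm_eq_one_mul_eq_norm (φ w - φ 0)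
  obtain ⟨β, hβ, hβψ⟩ := exists_norm_eq_one_mul_eq_norm (ψ w - ψ 0)
  have hF : DifferentiableOn ℂ (fun z => α * φ z + β * ψ z) (ball 0 1) :=
    (hφ.const_mul α).add (hψ.const_mul β)
  have hFM : ∀ z ∈ ball (0 : ℂ) 1, ‖α * φ z + β * ψ z‖ ≤ M := fun z hz =>
    calc ‖α * φ z + β * ψ z‖ ≤ ‖φ z‖ + ‖ψ z‖ := by
          simpa [hα, hβ] using norm_add_le (α * φ z) (β * ψ z)
      _ ≤ M := hM z hz
  have hFw : α * φ w + β * ψ w - (α * φ 0 + β * ψ 0) = ((‖φ w - φ 0‖ + ‖ψ w - ψ 0‖ : ℝ) : ℂ) := by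
    push_cast
    rw [← hαφ, ← hβψ]
    ring
  have key := norm_sub_le_mul_div_one_sub_norm hF hFM hw
  rwa [hFw, norm_real, Real.norm_of_nonneg (by positivity)] at key

theorem hasDerivAt_add_conj_comp_ofReal_mul {h g : ℂ → ℂ} {z : ℂ} {t : ℝ}
    (hh : DifferentiableAt ℂ h (t * z)) (hg : DifferentiableAt ℂ g (t * z)) :
    HasDerivAt (fun s : ℝ => h (s * z) + conj (g (s * z)))
      (deriv h (t * z) * z + conj (deriv g (t * z) * z)) t := by
  have hmul : HasDerivAt (fun s : ℂ => s * z) z t := by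
    simpa using (hasDerivAt_id (t : ℂ)).mul_const z
  exact (hh.hasDerivAt.comp (t : ℂ) hmul).comp_ofReal.add
    (hg.hasDerivAt.comp (t : ℂ) hmul).comp_ofReal.star

theorem hasDerivAt_neg_sub_log_one_sub {x : ℝ} (hx : x < 1) :
    HasDerivAt (fun x => -x - Real.log (1 - x)) (x / (1 - x)) x := by
  have hx' : 1 - x ≠ 0 := sub_ne_zero.2 hx.ne'
  have hlog : HasDerivAt (fun x => Real.log (1 - x)) (-1 / (1 - x)) x := by
    simpa using ((hasDerivAt_id' x).const_sub 1).log hx'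
  refine ((hasDerivAt_neg' x).sub hlog).congr_deriv ?_
  field_simp
  ring

theorem one_div_sqrt_le_sub_of_sq_sub_sq_eq_one {K a b : ℝ} (hK : 0 < K) (ha : 0 ≤ a)
    (hb : 0 ≤ b) (hab : a ^ 2 - b ^ 2 = 1) (hqr : a + b ≤ K * |a - b|) :
    1 / Real.sqrt K ≤ a - b := by
  have hpos : 0 < a - b := by nlinarith
  rw [abs_of_pos hpos] at hqr
  have hsq : 1 ≤ K * (a - b) ^ 2 := by nlinarith
  have hs := Real.sq_sqrt hK.le
  rw [div_le_iff₀ (Real.sqrt_pos.2 hK)]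
  nlinarith [Real.sqrt_nonneg K]

theorem sub_mul_norm_le_norm_mul_add_conj_mul (a b z : ℂ) :
    (‖a‖ - ‖b‖) * ‖z‖ ≤ ‖a * z + conj (b * z)‖ := by
  simpa [sub_mul] using norm_sub_norm_le (a * z) (-conj (b * z))

theorem norm_sub_linearization_le {h g : ℂ → ℂ} {M : ℝ}
    (hh : DifferentiableOn ℂ h (ball 0 1)) (hg : DifferentiableOn ℂ g (ball 0 1))
    (hM : ∀ z ∈ ball (0 : ℂ) 1, ‖deriv h z‖ + ‖deriv g z‖ ≤ M) {z : ℂ} (hz : ‖z‖ < 1) :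
    ‖h z + conj (g z) - (h 0 + conj (g 0)) - (deriv h 0 * z + conj (deriv g 0 * z))‖
      ≤ M * (-‖z‖ - Real.log (1 - ‖z‖)) := by
  set r := ‖z‖
  set L := deriv h 0 * z + conj (deriv g 0 * z)
  have hφ := (hh.analyticOnNhd isOpen_ball).deriv.differentiableOn
  have hψ := (hg.analyticOnNhd isOpen_ball).deriv.differentiableOn
  have hnorm : ∀ t ∈ Icc (0 : ℝ) 1, ‖(t : ℂ) * z‖ = t * r := fun t ht => by
    rw [norm_mul, norm_real, Real.norm_of_nonneg ht.1]
  have hlt : ∀ t ∈ Icc (0 : ℝ) 1, t * r < 1 := fun t ht => by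
    nlinarith [ht.2, norm_nonneg z]
  have hmem : ∀ t ∈ Icc (0 : ℝ) 1, (t : ℂ) * z ∈ ball 0 1 := fun t ht => by
    rw [mem_ball_zero_iff, hnorm t ht]; exact hlt t ht
  have hP : ∀ t ∈ Icc (0 : ℝ) 1,
      HasDerivAt (fun s : ℝ => h (s * z) + conj (g (s * z)) - (h 0 + conj (g 0)) - s * L)
        (deriv h (t * z) * z + conj (deriv g (t * z) * z) - L) t := fun t ht => by
    have hlin : HasDerivAt (fun s : ℝ => (s : ℂ) * L) L t := by
      simpa using (hasDerivAt_id t).ofReal_comp.mul_const L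
    exact ((hasDerivAt_add_conj_comp_ofReal_mul
      (hh.differentiableAt (isOpen_ball.mem_nhds (hmem t ht)))
      (hg.differentiableAt (isOpen_ball.mem_nhds (hmem t ht)))).sub_const _).sub hlin
  have hB : ∀ t ∈ Icc (0 : ℝ) 1, HasDerivAt (fun s => M * (-(s * r) - Real.log (1 - s * r)))
      (M * (t * r / (1 - t * r) * r)) t := fun t ht => by
    have hlog := hasDerivAt_neg_sub_log_one_sub (hlt t ht)
    exact (hlog.comp t (hasDerivAt_mul_const r)).const_mul M
  have bound : ∀ t ∈ Ico (0 : ℝ) 1,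
      ‖deriv h (t * z) * z + conj (deriv g (t * z) * z) - L‖ ≤ M * (t * r / (1 - t * r) * r) :=
    fun t ht => by
    have ht' := Ico_subset_Icc_self ht
    have hpair := norm_sub_add_norm_sub_le_mul_div_one_sub_norm hφ hψ hM
      ((hnorm t ht').trans_lt (hlt t ht'))
    rw [hnorm t ht'] at hpair
    calc ‖deriv h (t * z) * z + conj (deriv g (t * z) * z) - L‖
        = ‖(deriv h (t * z) - deriv h 0) * z + conj ((deriv g (t * z) - deriv g 0) * z)‖ := by
          simp only [L, sub_mul, map_sub]; ring_nf
      _ ≤ (‖deriv h (t * z) - deriv h 0‖ + ‖deriv g (t * z) - deriv g 0‖) * r := by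
          refine (norm_add_le _ _).trans_eq ?_
          rw [RCLike.norm_conj, norm_mul, norm_mul, add_mul]
      _ ≤ M * (t * r) / (1 - t * r) * r := by gcongr
      _ = M * (t * r / (1 - t * r) * r) := by ring
  -- Comparison along `t ↦ t z` with `M (-t r - log (1 - t r))`, which vanishes at `t = 0`.
  simpa using image_norm_le_of_norm_deriv_right_le_deriv_boundary'
    (fun t ht => (hP t ht).continuousAt.continuousWithinAt)
    (fun t ht => (hP t (Ico_subset_Icc_self ht)).hasDerivWithinAt)
    (by simp) (fun t ht => (hB t ht).continuousAt.continuousWithinAt)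
    (fun t ht => (hB t (Ico_subset_Icc_self ht)).hasDerivWithinAt) bound
    (right_mem_Icc.2 zero_le_one)

theorem modulus_lower_bound_quasiregular_general
    (K lam : ℝ) (hK : 1 ≤ K) (hlam : 0 < lam)
    (h g f : ℂ → ℂ)
    (hf : ∀ z ∈ ball (0:ℂ) 1, f z = h z + (starRingEnd ℂ) (g z))
    (hh : DifferentiableOn ℂ h (ball (0:ℂ) 1))
    (hg : DifferentiableOn ℂ g (ball (0:ℂ) 1))
    (hqr : ∀ z ∈ ball (0:ℂ) 1,
      ‖deriv h z‖ + ‖deriv g z‖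
        ≤ K * |‖deriv h z‖ - ‖deriv g z‖|)
    (hf0 : f 0 = 0)
    (hJ0 : ‖deriv h 0‖ ^ 2 - ‖deriv g 0‖ ^ 2 = 1)
    (hlamf : ∀ z ∈ ball (0:ℂ) 1,
      |‖deriv h z‖ - ‖deriv g z‖| ≤ lam) :
    ∀ z : ℂ, ‖z‖ = 1 / (1 + lam * K ^ ((3:ℝ)/2)) →
      1 / (1 + lam * K ^ ((3:ℝ)/2)) / Real.sqrt K
          + K * lam * (1 / (1 + lam * K ^ ((3:ℝ)/2))
            + Real.log (1 - 1 / (1 + lam * K ^ ((3:ℝ)/2))))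
        ≤ ‖f z‖ := by
  intro z hz
  have hK0 : 0 < K := by linarith
  have hz1 : ‖z‖ < 1 := by
    rw [hz, div_lt_one (by positivity)]
    linarith [mul_pos hlam (Real.rpow_pos_of_pos hK0 ((3 : ℝ) / 2))]
  rw [← hz]
  have hΛ : ∀ w ∈ ball (0 : ℂ) 1, ‖deriv h w‖ + ‖deriv g w‖ ≤ K * lam := fun w hw =>
    (hqr w hw).trans (mul_le_mul_of_nonneg_left (hlamf w hw) hK0.le)
  have hdist := norm_sub_linearization_le hh hg hΛ hz1
  rw [← hf z (mem_ball_zero_iff.2 hz1), ← hf 0 (mem_ball_self one_pos), hf0, sub_zero] at hdist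
  have hlin := sub_mul_norm_le_norm_mul_add_conj_mul (deriv h 0) (deriv g 0) z
  have hJ := one_div_sqrt_le_sub_of_sq_sub_sq_eq_one hK0 (norm_nonneg _) (norm_nonneg _) hJ0
    (hqr 0 (mem_ball_self one_pos))
  have hscale : ‖z‖ / Real.sqrt K ≤ (‖deriv h 0‖ - ‖deriv g 0‖) * ‖z‖ := by
    rw [div_eq_mul_one_div, mul_comm]
    exact mul_le_mul_of_nonneg_right hJ (norm_nonneg z)
  linarith [norm_le_norm_sub_add (deriv h 0 * z + conj (deriv g 0 * z)) (f z),
    norm_sub_rev (f z) (deriv h 0 * z + conj (deriv g 0 * z))]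

/-- Lower bound for |f(z)| on the circle |z| = ρ for K-quasiregular harmonic
mappings with J_f(0) = 1: |f(z)| ≥ ρ/√K + Kλ(ρ + ln(1 − ρ)). -/
theorem modulus_lower_bound_quasiregular
    (K lam : ℝ) (hK : 1 ≤ K) (hlam : 0 < lam)
    (h g f : ℂ → ℂ)
    (hf : ∀ z ∈ ball (0:ℂ) 1, f z = h z + (starRingEnd ℂ) (g z))
    (hh : DifferentiableOn ℂ h (ball (0:ℂ) 1))
    (hg : DifferentiableOn ℂ g (ball (0:ℂ) 1))
    (hsp : ∀ z ∈ ball (0:ℂ) 1,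
      0 < ‖deriv h z‖ ^ 2 - ‖deriv g z‖ ^ 2)
    (hqr : ∀ z ∈ ball (0:ℂ) 1,
      ‖deriv h z‖ + ‖deriv g z‖
        ≤ K * |‖deriv h z‖ - ‖deriv g z‖|)
    (hf0 : f 0 = 0)
    (hJ0 : ‖deriv h 0‖ ^ 2 - ‖deriv g 0‖ ^ 2 = 1)
    (hlamf : ∀ z ∈ ball (0:ℂ) 1,
      |‖deriv h z‖ - ‖deriv g z‖| ≤ lam) :
    ∀ z : ℂ, ‖z‖ = 1 / (1 + lam * K ^ ((3:ℝ)/2)) →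
      1 / (1 + lam * K ^ ((3:ℝ)/2)) / Real.sqrt K
          + K * lam * (1 / (1 + lam * K ^ ((3:ℝ)/2))
            + Real.log (1 - 1 / (1 + lam * K ^ ((3:ℝ)/2))))
        ≤ ‖f z‖ :=
  modulus_lower_bound_quasiregular_general K lam hK hlam h g f hf hh hg hqr hf0 hJ0 hlamf
end
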